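/- arXiv:1910.12518 — 2 statements merged into one kernel-verified Lean document; each statement's English description precedes it below -/
import Mathlib

section
/- For 0 < q < 1, positive integer n, and real ε with 0 < ε ≤ 1, any two distinct points x₁, x₂ of the set E_n(ε) = {q^{k/n} : k ∈ ℕ, q^{k/n} ≥ ε} satisfy |x₁ - x₂| ≥ (1-q)ε/n. -/
/-! Bernoulli's inequality for the exponent `1/n` gives `q^{1/n} ≤ 1 - (1 - q)/n`, so consecutive
points `q^{k/n} > q^{(k+1)/n}` differ by at least `(1 - q) q^{k/n} / n ≥ (1 - q) ε / n`. -/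

lemma rpow_sub_rpow_ge_of_add_le {q a b p : ℝ} (hq0 : 0 < q) (hq1 : q ≤ 1)
    (hp0 : 0 ≤ p) (hp1 : p ≤ 1) (hab : a + p ≤ b) :
    p * (1 - q) * q ^ a ≤ q ^ a - q ^ b := by
  have bernoulli : q ^ p ≤ 1 - p * (1 - q) := by
    have h := rpow_one_add_le_one_add_mul_self (s := q - 1) (by linarith) hp0 hp1
    rw [add_sub_cancel] at h
    linarith
  have hb : q ^ b ≤ q ^ a * q ^ p := by
    rw [← Real.rpow_add hq0]
    exact Real.rpow_le_rpow_of_exponent_ge hq0 hq1 hab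
  nlinarith [Real.rpow_nonneg hq0.le a]

lemma rpow_natCast_div_sub_rpow_natCast_div_ge {q : ℝ} (hq0 : 0 < q) (hq1 : q ≤ 1) (n : ℕ)
    {k₁ k₂ : ℕ} (hk : k₁ < k₂) :
    (1 - q) * q ^ ((k₁ : ℝ) / n) / n ≤ q ^ ((k₁ : ℝ) / n) - q ^ ((k₂ : ℝ) / n) := by
  have hk' : (k₁ : ℝ) + 1 ≤ k₂ := by exact_mod_cast hk
  have hab : (k₁ : ℝ) / n + 1 / n ≤ k₂ / n := by
    rw [← add_div]
    exact div_le_div_of_nonneg_right hk' n.cast_nonneg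
  have h := rpow_sub_rpow_ge_of_add_le hq0 hq1 (by positivity)
    (by simpa using Nat.cast_inv_le_one n) hab
  calc (1 - q) * q ^ ((k₁ : ℝ) / n) / n = 1 / n * (1 - q) * q ^ ((k₁ : ℝ) / n) := by ring
    _ ≤ _ := h

theorem stmt_1_general (q : ℝ) (hq0 : 0 < q) (hq1 : q < 1) (n : ℕ)
    (ε : ℝ)
    (x₁ x₂ : ℝ)
    (hx₁ : x₁ ∈ {x : ℝ | ∃ k : ℕ, x = q ^ ((k : ℝ) / n) ∧ ε ≤ x})
    (hx₂ : x₂ ∈ {x : ℝ | ∃ k : ℕ, x = q ^ ((k : ℝ) / n) ∧ ε ≤ x})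
    (hne : x₁ ≠ x₂) :
    |x₁ - x₂| ≥ (1 - q) * ε / n := by
  wlog hlt : x₂ < x₁ generalizing x₁ x₂
  · rw [abs_sub_comm]
    exact this x₂ x₁ hx₂ hx₁ hne.symm (lt_of_le_of_ne (not_lt.mp hlt) hne)
  obtain ⟨k₁, rfl, hε⟩ := hx₁
  obtain ⟨k₂, rfl, -⟩ := hx₂
  have hk : k₁ < k₂ := by
    by_contra! hk
    exact hlt.not_ge (Real.rpow_le_rpow_of_exponent_ge hq0 hq1.le
      (div_le_div_of_nonneg_right (by exact_mod_cast hk) n.cast_nonneg))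
  calc (1 - q) * ε / n ≤ (1 - q) * q ^ ((k₁ : ℝ) / n) / n := by
        gcongr
    _ ≤ q ^ ((k₁ : ℝ) / n) - q ^ ((k₂ : ℝ) / n) :=
        rpow_natCast_div_sub_rpow_natCast_div_ge hq0 hq1.le n hk
    _ ≤ _ := le_abs_self _

theorem stmt_1 (q : ℝ) (hq0 : 0 < q) (hq1 : q < 1) (n : ℕ) (hn : 0 < n)
    (ε : ℝ) (hε0 : 0 < ε) (hε1 : ε ≤ 1)
    (x₁ x₂ : ℝ)
    (hx₁ : x₁ ∈ {x : ℝ | ∃ k : ℕ, x = q ^ ((k : ℝ) / n) ∧ ε ≤ x})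
    (hx₂ : x₂ ∈ {x : ℝ | ∃ k : ℕ, x = q ^ ((k : ℝ) / n) ∧ ε ≤ x})
    (hne : x₁ ≠ x₂) :
    |x₁ - x₂| ≥ (1 - q) * ε / n :=
  stmt_1_general q hq0 hq1 n ε x₁ x₂ hx₁ hx₂ hne
end

section
/- Let 0 < q < 1 and c < 0. Then lim_{n→∞} (1/n²) · log ∏_{j=0}^∞ (1 + q^{nc+j}) = -(c²/2) · log q. -/
/-!
Write `x = n c ≤ 0`. The logarithm of the product is `∑ j, log (1 + q ^ (x + j))`. A term with
`x + j ≤ 0` equals `(x + j) log q` up to an error in `[0, log 2]`, while the terms with `x + j ≥ 0`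
are at most `q ^ (x + j)` and so sum to at most `1 / (1 - q)`. Hence the logarithm is
`log q · ∑_{j < ⌈-x⌉} (x + j) + O(1 - x) = -(x² / 2) log q + O(1 - x)`, and dividing by `n²`
gives the limit.
-/

open Filter Finset Real

lemma abs_sum_range_ceil_add_sq_le {x : ℝ} (hx : x ≤ 0) :
    |∑ j ∈ range ⌈-x⌉₊, (x + j) + x ^ 2 / 2| ≤ (1 - x) / 2 := by
  set m := ⌈-x⌉₊
  have hm_ge : -x ≤ m := Nat.le_ceil _
  have hm_lt : (m : ℝ) < -x + 1 := Nat.ceil_lt_add_one (by linarith)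
  have gauss : ∀ k : ℕ, ∑ j ∈ range k, (j : ℝ) = k * (k - 1) / 2 := by
    intro k
    induction k with
    | zero => simp
    | succ k ih => rw [sum_range_succ, ih]; push_cast; ring
  rw [sum_add_distrib, sum_const, card_range, nsmul_eq_mul, gauss, abs_le]
  constructor <;> nlinarith

section

variable {q : ℝ}

lemma summable_rpow_add_natCast (hq0 : 0 < q) (hq1 : q < 1) (x : ℝ) :
    Summable fun j : ℕ => q ^ (x + j) := by
  simp_rw [rpow_add hq0, rpow_natCast]
  exact (summable_geometric_of_lt_one hq0.le hq1).mul_left _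

lemma summable_log_one_add_rpow_add_natCast (hq0 : 0 < q) (hq1 : q < 1) (x : ℝ) :
    Summable fun j : ℕ => log (1 + q ^ (x + j)) :=
  summable_log_one_add_of_summable (summable_rpow_add_natCast hq0 hq1 x)

lemma log_tprod_one_add_rpow (hq0 : 0 < q) (hq1 : q < 1) (x : ℝ) :
    log (∏' j : ℕ, (1 + q ^ (x + j))) = ∑' j : ℕ, log (1 + q ^ (x + j)) := by
  rw [← rexp_tsum_eq_tprod (fun j => by positivity)
    (summable_log_one_add_rpow_add_natCast hq0 hq1 x), log_exp]

lemma mul_log_le_log_one_add_rpow (hq0 : 0 < q) (y : ℝ) : y * log q ≤ log (1 + q ^ y) := by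
  rw [← log_rpow hq0]
  exact log_le_log (by positivity) (by linarith)

lemma log_one_add_rpow_le_of_nonpos (hq0 : 0 < q) (hq1 : q ≤ 1) {y : ℝ} (hy : y ≤ 0) :
    log (1 + q ^ y) ≤ y * log q + log 2 := by
  have : 1 ≤ q ^ y := one_le_rpow_of_pos_of_le_one_of_nonpos hq0 hq1 hy
  rw [← log_rpow hq0, ← log_mul (by positivity) two_ne_zero]
  exact log_le_log (by positivity) (by linarith)

lemma tsum_log_one_add_rpow_le (hq0 : 0 < q) (hq1 : q < 1) {x : ℝ} (hx : 0 ≤ x) :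
    ∑' j : ℕ, log (1 + q ^ (x + j)) ≤ (1 - q)⁻¹ := by
  rw [← tsum_geometric_of_lt_one hq0.le hq1]
  refine (summable_log_one_add_rpow_add_natCast hq0 hq1 x).tsum_le_tsum (fun j => ?_)
    (summable_geometric_of_lt_one hq0.le hq1)
  calc log (1 + q ^ (x + j)) ≤ q ^ (x + j) := by
        linarith [log_le_sub_one_of_pos (by positivity : 0 < 1 + q ^ (x + j))]
    _ ≤ q ^ (j : ℝ) := rpow_le_rpow_of_exponent_ge hq0 hq1.le (by linarith)
    _ = q ^ j := rpow_natCast q j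

lemma abs_tsum_log_one_add_rpow_add_sq_mul_log_le (hq0 : 0 < q) (hq1 : q < 1)
    {x : ℝ} (hx : x ≤ 0) :
    |∑' j : ℕ, log (1 + q ^ (x + j)) + x ^ 2 / 2 * log q| ≤
      (log 2 - log q / 2 + (1 - q)⁻¹) * (1 - x) := by
  set m := ⌈-x⌉₊
  have hm_ge : -x ≤ m := Nat.le_ceil _
  have hm_lt : (m : ℝ) < 1 - x := by linarith [Nat.ceil_lt_add_one (by linarith : 0 ≤ -x)]
  set S := ∑ j ∈ range m, (x + j)
  set head := ∑ j ∈ range m, log (1 + q ^ (x + j))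
  set tail := ∑' k : ℕ, log (1 + q ^ ((x + m) + k))
  have hsplit : ∑' j : ℕ, log (1 + q ^ (x + j)) = head + tail := by
    rw [← (summable_log_one_add_rpow_add_natCast hq0 hq1 x).sum_add_tsum_nat_add m]
    congr! 4 with k
    rw [Nat.cast_add, add_comm (k : ℝ), add_assoc]
  have head_ge : S * log q ≤ head := by
    rw [sum_mul]
    exact sum_le_sum fun j _ => mul_log_le_log_one_add_rpow hq0 _
  have head_le : head ≤ S * log q + m * log 2 := by
    calc head ≤ ∑ j ∈ range m, ((x + j) * log q + log 2) := by
          refine sum_le_sum fun j hj => log_one_add_rpow_le_of_nonpos hq0 hq1.le ?_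
          linarith [Nat.lt_ceil.1 (mem_range.1 hj)]
      _ = S * log q + m * log 2 := by
          rw [sum_add_distrib, sum_mul, sum_const, card_range, nsmul_eq_mul]
  have tail_nonneg : 0 ≤ tail :=
    tsum_nonneg fun k => log_nonneg (by linarith [rpow_pos_of_pos hq0 ((x + m) + k)])
  have tail_le : tail ≤ (1 - q)⁻¹ := tsum_log_one_add_rpow_le hq0 hq1 (by linarith)
  have hS := abs_le.1 (abs_sum_range_ceil_add_sq_le hx)
  have hlogq : log q < 0 := log_neg hq0 hq1
  have hlog2 : 0 < log 2 := log_pos one_lt_two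
  have hgeom : 0 < (1 - q)⁻¹ := inv_pos.2 (by linarith)
  rw [hsplit, abs_le]
  constructor
  · nlinarith [mul_le_mul_of_nonpos_left hS.2 hlogq.le]
  · nlinarith [mul_le_mul_of_nonpos_left hS.1 hlogq.le,
      mul_le_mul_of_nonneg_left hm_lt.le hlog2.le]

end

theorem stmt_7 (q : ℝ) (hq0 : 0 < q) (hq1 : q < 1) (c : ℝ) (hc : c < 0) :
    Filter.Tendsto
      (fun n : ℕ =>
        (1 / (n : ℝ) ^ 2) * Real.log (∏' j : ℕ, (1 + q ^ ((n : ℝ) * c + (j : ℝ)))))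
      Filter.atTop (nhds (-(c ^ 2 / 2) * Real.log q)) := by
  have hK : 0 ≤ log 2 - log q / 2 + (1 - q)⁻¹ := by
    have : 0 < (1 - q)⁻¹ := inv_pos.2 (by linarith)
    linarith [log_neg hq0 hq1, log_pos one_lt_two]
  set K := log 2 - log q / 2 + (1 - q)⁻¹
  rw [tendsto_iff_norm_sub_tendsto_zero]
  refine squeeze_zero' (Eventually.of_forall fun n => norm_nonneg _) ?_
    (tendsto_const_div_atTop_nhds_zero_nat (K * (1 - c)))
  filter_upwards [eventually_ge_atTop 1] with n hn
  have hn : (1 : ℝ) ≤ n := by exact_mod_cast hn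
  have key := abs_tsum_log_one_add_rpow_add_sq_mul_log_le hq0 hq1 (x := n * c) (by nlinarith)
  set F := ∑' j : ℕ, log (1 + q ^ ((n : ℝ) * c + j))
  have hdiff : 1 / (n : ℝ) ^ 2 * F - -(c ^ 2 / 2) * log q
      = (F + ((n : ℝ) * c) ^ 2 / 2 * log q) / (n : ℝ) ^ 2 := by
    field_simp
    ring
  rw [log_tprod_one_add_rpow hq0 hq1, Real.norm_eq_abs, hdiff, abs_div,
    abs_of_pos (a := (n : ℝ) ^ 2) (by positivity), div_le_div_iff₀ (by positivity) (by positivity)]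
  calc |F + ((n : ℝ) * c) ^ 2 / 2 * log q| * n ≤ K * (1 - n * c) * n := by gcongr
    _ ≤ K * (1 - c) * n ^ 2 := by nlinarith [mul_nonneg hK (by linarith : (0 : ℝ) ≤ n - 1)]
end
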